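/- arXiv:2202.05800 — 2 statements merged into one kernel-verified Lean document; each statement's English description precedes it below -/
import Mathlib

section
/- Let f: ℝⁿ → ℝ be twice continuously differentiable with Hessian H(θ) that is L-Lipschitz in spectral norm, and let θ* be a minimizer with gradient g(θ) = ∇f(θ). Suppose at iteration t the update is θ^{t+1} = θ^t − η Ĥ^{-1}g(θ^t), where Ĥ is symmetric with Ĥ ⪰ ρ̄ I and ‖Ĥ − H(θ^{k})‖ ≤ ρ̄ − λ̄ₙ for some earlier point θ^k and constants ρ̄ ≥ λ̄ₙ > 0. Then ‖θ^{t+1} − θ*‖ ≤ c₁‖θ^t − θ*‖ + c₂‖θ^t − θ*‖² with c₁ = (1 − λ̄ₙ/ρ̄) + (L/ρ̄)‖θ^t − θ^k‖ + (1−η)‖H(θ^t)‖/ρ̄ and c₂ = ηL/(2ρ̄). -/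
/-- The Hessian of `f` as a continuous linear map, `Hess f θ = D(∇f)(θ)`. -/
noncomputable def hess {n : ℕ} (f : EuclideanSpace ℝ (Fin n) → ℝ)
    (θ : EuclideanSpace ℝ (Fin n)) :
    EuclideanSpace ℝ (Fin n) →L[ℝ] EuclideanSpace ℝ (Fin n) :=
  fderiv ℝ (gradient f) θ

/-!
Write `e = θᵗ - θ*` and `g = ∇f(θᵗ)`. Since `∇f(θ*) = 0`, the Lipschitz bound on the Hessian gives
the second-order Taylor estimate `‖H(θᵗ) e - g‖ ≤ (L/2) ‖e‖²`. Applying `Ĥ` to the new error splits it as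
`Ĥ (θᵗ⁺¹ - θ*) = (Ĥ - H(θᵏ)) e + (H(θᵏ) - H(θᵗ)) e + (1 - η) H(θᵗ) e + η (H(θᵗ) e - g)`,
whose first two terms are controlled by `‖Ĥ - H(θᵏ)‖ ≤ ρ̄ - λ̄ₙ` and the Lipschitz bound, and the
last by the Taylor estimate. Finally coercivity `⟪x, Ĥ x⟫ ≥ ρ̄ ‖x‖²` gives
`‖x‖ ≤ ‖Ĥ x‖ / ρ̄`.
-/

open Set

theorem norm_sub_sub_fderiv_le_of_lipschitz {E F : Type*} [NormedAddCommGroup E] [NormedSpace ℝ E]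
    [NormedAddCommGroup F] [NormedSpace ℝ F] {g : E → F} {g' : E → E →L[ℝ] F} {L : ℝ} {x y : E}
    (hg : ∀ z, HasFDerivAt g (g' z) z) (hLip : ∀ z, ‖g' z - g' x‖ ≤ L * ‖z - x‖) :
    ‖g y - g x - g' x (y - x)‖ ≤ L / 2 * ‖y - x‖ ^ 2 := by
  set v := y - x
  let φ : ℝ → F := fun s => g (x + s • v) - g x - s • g' x v
  have hφ : ∀ s, HasDerivAt φ ((g' (x + s • v) - g' x) v) s := by
    intro s
    have hline : HasDerivAt (fun s : ℝ => x + s • v) v s := by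
      simpa using ((hasDerivAt_id s).smul_const v).const_add x
    have := (((hg _).comp_hasDerivAt s hline).sub_const (g x)).sub
      ((hasDerivAt_id s).smul_const (g' x v))
    rw [sub_apply, ← one_smul ℝ (g' x v)]
    exact this
  have hB : ∀ s, HasDerivAt (fun s : ℝ => L / 2 * ‖v‖ ^ 2 * s ^ 2) (L * ‖v‖ ^ 2 * s) s :=
    fun s => ((hasDerivAt_pow 2 s).const_mul _).congr_deriv (by push_cast; ring)
  have hbound : ∀ s ∈ Ico (0 : ℝ) 1, ‖(g' (x + s • v) - g' x) v‖ ≤ L * ‖v‖ ^ 2 * s := by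
    rintro s ⟨hs0, -⟩
    calc ‖(g' (x + s • v) - g' x) v‖ ≤ ‖g' (x + s • v) - g' x‖ * ‖v‖ :=
          ContinuousLinearMap.le_opNorm _ _
      _ ≤ L * ‖s • v‖ * ‖v‖ := by
          gcongr
          simpa using hLip (x + s • v)
      _ = L * ‖v‖ ^ 2 * s := by
          rw [norm_smul, Real.norm_of_nonneg hs0]; ring
  have := image_norm_le_of_norm_deriv_right_le_deriv_boundary
    (fun s _ => (hφ s).continuousAt.continuousWithinAt) (fun s _ => (hφ s).hasDerivWithinAt)
    (by simp [φ]) hB hbound (right_mem_Icc.2 zero_le_one)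
  simpa [φ, v] using this

theorem mul_norm_le_norm_apply_of_coercive {E : Type*} [NormedAddCommGroup E] [InnerProductSpace ℝ E]
    {A : E →L[ℝ] E} {ρ : ℝ} (hA : ∀ x, ρ * ‖x‖ ^ 2 ≤ inner ℝ x (A x)) (x : E) :
    ρ * ‖x‖ ≤ ‖A x‖ := by
  rcases (norm_nonneg x).eq_or_lt with hx | hx
  · rw [← hx, mul_zero]; exact norm_nonneg _
  · refine le_of_mul_le_mul_right ?_ hx
    calc ρ * ‖x‖ * ‖x‖ = ρ * ‖x‖ ^ 2 := by ring
      _ ≤ inner ℝ x (A x) := hA x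
      _ ≤ ‖x‖ * ‖A x‖ := real_inner_le_norm x (A x)
      _ = ‖A x‖ * ‖x‖ := mul_comm _ _

theorem ContDiff.differentiable_gradient {E : Type*} [NormedAddCommGroup E] [InnerProductSpace ℝ E]
    [CompleteSpace E] {f : E → ℝ} (hf : ContDiff ℝ 2 f) : Differentiable ℝ (gradient f) :=
  (InnerProductSpace.toDual ℝ E).symm.differentiable.comp
    ((hf.fderiv_right (m := 1) (by norm_num)).differentiable one_ne_zero)

theorem norm_apply_damped_newton_step_le {E : Type*} [NormedAddCommGroup E] [NormedSpace ℝ E]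
    {A Ainv B H : E →L[ℝ] E} (hA : A.comp Ainv = ContinuousLinearMap.id ℝ E) (e g : E) {η : ℝ}
    (hη0 : 0 ≤ η) (hη1 : η ≤ 1) :
    ‖A (e - η • Ainv g)‖ ≤
      ‖A - B‖ * ‖e‖ + ‖B - H‖ * ‖e‖ + (1 - η) * (‖H‖ * ‖e‖) + η * ‖H e - g‖ := by
  have hAinv : A (Ainv g) = g := by simpa using DFunLike.congr_fun hA g
  have hsplit : A (e - η • Ainv g) =
      (A - B) e + (B - H) e + (1 - η) • H e + η • (H e - g) := by
    simp only [map_sub, map_smul, hAinv, sub_apply, sub_smul, one_smul, smul_sub]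
    abel
  rw [hsplit]
  refine norm_add₄_le.trans (add_le_add (add_le_add (add_le_add ?_ ?_) ?_) ?_)
  · exact ContinuousLinearMap.le_opNorm _ _
  · exact ContinuousLinearMap.le_opNorm _ _
  · rw [norm_smul, Real.norm_of_nonneg (sub_nonneg.2 hη1)]
    exact mul_le_mul_of_nonneg_left (ContinuousLinearMap.le_opNorm _ _) (sub_nonneg.2 hη1)
  · rw [norm_smul, Real.norm_of_nonneg hη0]

theorem stmt12_general (n : ℕ) (f : EuclideanSpace ℝ (Fin n) → ℝ) (hf : ContDiff ℝ 2 f)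
    (L ρbar lambar η : ℝ)
    (hLip : ∀ θ θ' : EuclideanSpace ℝ (Fin n), ‖hess f θ - hess f θ'‖ ≤ L * ‖θ - θ'‖)
    (θstar : EuclideanSpace ℝ (Fin n))
    (hgrad0 : gradient f θstar = 0)
    (Hhat HhatInv : EuclideanSpace ℝ (Fin n) →L[ℝ] EuclideanSpace ℝ (Fin n))
    (hlb : ∀ x : EuclideanSpace ℝ (Fin n), ρbar * ‖x‖ ^ 2 ≤ (inner ℝ x (Hhat x) : ℝ))
    (hinv₂ : Hhat.comp HhatInv = ContinuousLinearMap.id ℝ _)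
    (θk θt : EuclideanSpace ℝ (Fin n))
    (hclose : ‖Hhat - hess f θk‖ ≤ ρbar - lambar)
    (hlam : 0 < lambar) (hrl : lambar ≤ ρbar)
    (hη : 0 < η) (hη1 : η ≤ 1) :
    ‖(θt - η • HhatInv (gradient f θt)) - θstar‖ ≤
      ((1 - lambar / ρbar) + (L / ρbar) * ‖θt - θk‖ + (1 - η) * ‖hess f θt‖ / ρbar) *
          ‖θt - θstar‖ +
        (η * L / (2 * ρbar)) * ‖θt - θstar‖ ^ 2 := by
  have hρ : 0 < ρbar := hlam.trans_le hrl
  set e := θt - θstar with he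
  have htaylor : ‖hess f θt e - gradient f θt‖ ≤ L / 2 * ‖e‖ ^ 2 := by
    have hg := hf.differentiable_gradient
    calc ‖hess f θt e - gradient f θt‖
        = ‖gradient f θstar - gradient f θt - hess f θt (θstar - θt)‖ := by
          rw [hgrad0, he, ← neg_sub θt θstar, map_neg]
          congr 1
          abel
      _ ≤ L / 2 * ‖θstar - θt‖ ^ 2 :=
          norm_sub_sub_fderiv_le_of_lipschitz (fun z => (hg z).hasFDerivAt) (fun z => hLip z θt)
      _ = L / 2 * ‖e‖ ^ 2 := by rw [norm_sub_rev]
  have hstep : ρbar * ‖(θt - η • HhatInv (gradient f θt)) - θstar‖ ≤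
      (ρbar - lambar) * ‖e‖ + L * ‖θt - θk‖ * ‖e‖ + (1 - η) * (‖hess f θt‖ * ‖e‖) +
        η * (L / 2 * ‖e‖ ^ 2) := by
    rw [sub_right_comm]
    refine (mul_norm_le_norm_apply_of_coercive hlb _).trans <|
      (norm_apply_damped_newton_step_le hinv₂ e _ hη.le hη1 (B := hess f θk)
        (H := hess f θt)).trans ?_
    gcongr
    rw [norm_sub_rev]
    exact hLip θt θk
  rw [← le_div_iff₀' hρ] at hstep
  refine hstep.trans_eq ?_
  field_simp

/-- convergence bound of a Newton-type step with an outdated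
approximate Hessian `Ĥ` satisfying `Ĥ ⪰ ρ̄I` and `‖Ĥ − H(θᵏ)‖ ≤ ρ̄ − λ̄ₙ`. -/
theorem stmt12 (n : ℕ) (f : EuclideanSpace ℝ (Fin n) → ℝ) (hf : ContDiff ℝ 2 f)
    (L ρbar lambar η : ℝ) (hL : 0 < L)
    (hLip : ∀ θ θ' : EuclideanSpace ℝ (Fin n), ‖hess f θ - hess f θ'‖ ≤ L * ‖θ - θ'‖)
    (θstar : EuclideanSpace ℝ (Fin n)) (hmin : IsMinOn f Set.univ θstar)
    (hgrad0 : gradient f θstar = 0)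
    (Hhat HhatInv : EuclideanSpace ℝ (Fin n) →L[ℝ] EuclideanSpace ℝ (Fin n))
    (hsa : IsSelfAdjoint Hhat)
    (hlb : ∀ x : EuclideanSpace ℝ (Fin n), ρbar * ‖x‖ ^ 2 ≤ (inner ℝ x (Hhat x) : ℝ))
    (hinv₁ : HhatInv.comp Hhat = ContinuousLinearMap.id ℝ _)
    (hinv₂ : Hhat.comp HhatInv = ContinuousLinearMap.id ℝ _)
    (θk θt : EuclideanSpace ℝ (Fin n))
    (hclose : ‖Hhat - hess f θk‖ ≤ ρbar - lambar)
    (hlam : 0 < lambar) (hrl : lambar ≤ ρbar)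
    (hη : 0 < η) (hη1 : η ≤ 1) :
    ‖(θt - η • HhatInv (gradient f θt)) - θstar‖ ≤
      ((1 - lambar / ρbar) + (L / ρbar) * ‖θt - θk‖ + (1 - η) * ‖hess f θt‖ / ρbar) *
          ‖θt - θstar‖ +
        (η * L / (2 * ρbar)) * ‖θt - θstar‖ ^ 2 :=
  stmt12_general n f hf L ρbar lambar η hLip θstar hgrad0 Hhat HhatInv hlb hinv₂ θk θt hclose hlam
    hrl hη hη1
end

section
/- For the quadratic cost f(θ) = f(θ*) + ½(θ−θ*)ᵀH(θ−θ*) with H symmetric positive definite, there exist Ĥ = diag(λ₁,...,λ_q, ρ*,...,ρ*) with ρ* = (λ_{q+1}+λₙ)/2 and a gradient g such that the full step η = 1 with direction p = Ĥ^{-1}g fails the Armijo condition f(θ − p) ≤ f(θ) − α pᵀg unless α ≤ λₙ/(λ_{q+1} + λₙ). In particular, for any fixed α ∈ (0,1/2), if λₙ/(λ_{q+1}+λₙ) < α then η = 1 is rejected. -/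
open scoped RealInnerProductSpace

/-- Rank-one projection `x ↦ ⟪v, x⟫ • v`. -/
noncomputable def projCL {n : ℕ} (v : EuclideanSpace ℝ (Fin n)) :
    EuclideanSpace ℝ (Fin n) →L[ℝ] EuclideanSpace ℝ (Fin n) :=
  (innerSL ℝ v).smulRight v

/-- The approximation `Ĥ(ρ,q)` keeping the top `q` eigenpairs and replacing the
remaining eigenvalues by `ρ`. -/
noncomputable def hatH {n : ℕ} (v : OrthonormalBasis (Fin n) ℝ (EuclideanSpace ℝ (Fin n)))
    (lam : Fin n → ℝ) (q : ℕ) (ρ : ℝ) :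
    EuclideanSpace ℝ (Fin n) →L[ℝ] EuclideanSpace ℝ (Fin n) :=
  ∑ k : Fin n, (if (k : ℕ) < q then lam k else ρ) • projCL (v k)

/-- The inverse of `Ĥ(ρ,q)`. -/
noncomputable def hatHinv {n : ℕ} (v : OrthonormalBasis (Fin n) ℝ (EuclideanSpace ℝ (Fin n)))
    (lam : Fin n → ℝ) (q : ℕ) (ρ : ℝ) :
    EuclideanSpace ℝ (Fin n) →L[ℝ] EuclideanSpace ℝ (Fin n) :=
  ∑ k : Fin n, (if (k : ℕ) < q then (lam k)⁻¹ else ρ⁻¹) • projCL (v k)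

/-- Iteration matrix `I − η Ĥ(ρ,q)⁻¹ H`. -/
noncomputable def iterMat {n : ℕ} (H : EuclideanSpace ℝ (Fin n) →L[ℝ] EuclideanSpace ℝ (Fin n))
    (v : OrthonormalBasis (Fin n) ℝ (EuclideanSpace ℝ (Fin n)))
    (lam : Fin n → ℝ) (q : ℕ) (ρ η : ℝ) :
    EuclideanSpace ℝ (Fin n) →L[ℝ] EuclideanSpace ℝ (Fin n) :=
  ContinuousLinearMap.id ℝ _ - η • ((hatHinv v lam q ρ).comp H)

/-- Diagonal operator with entries `lam` in the standard basis of Euclidean space. -/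
noncomputable def diagCL {n : ℕ} (lam : Fin n → ℝ) :
    EuclideanSpace ℝ (Fin n) →L[ℝ] EuclideanSpace ℝ (Fin n) :=
  ∑ k : Fin n, lam k • projCL (EuclideanSpace.basisFun (Fin n) ℝ k)

/-!
Take `θ = e_q` (the `(q+1)`-st standard basis vector, indexed from `0`) and `θ* = 0`. Then
`e_q` is an eigenvector of both `H` (eigenvalue `λ_{q+1}`) and `Ĥ` (eigenvalue `ρ*`), so the
full step stays on the line `ℝ e_q` and the Armijo test reduces to a scalar inequality
for the quadratic `x ↦ λ_{q+1} x² / 2` with step `t = λ_{q+1} / ρ*`; it holds exactly when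
`α ≤ 1 - t / 2 = λ_n / (λ_{q+1} + λ_n)`.
-/

theorem sum_smul_projCL_apply {n : ℕ} (v : OrthonormalBasis (Fin n) ℝ (EuclideanSpace ℝ (Fin n)))
    (c : Fin n → ℝ) (i : Fin n) :
    (∑ k, c k • projCL (v k)) (v i) = c i • v i := by
  simp [projCL, v.inner_eq_ite]

theorem diagCL_apply_basisFun {n : ℕ} (lam : Fin n → ℝ) (i : Fin n) :
    diagCL lam (EuclideanSpace.basisFun (Fin n) ℝ i) =
      lam i • EuclideanSpace.basisFun (Fin n) ℝ i :=
  sum_smul_projCL_apply _ lam i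

theorem hatHinv_apply_of_le {n : ℕ} (v : OrthonormalBasis (Fin n) ℝ (EuclideanSpace ℝ (Fin n)))
    (lam : Fin n → ℝ) {q : ℕ} (ρ : ℝ) {i : Fin n} (hi : q ≤ i) :
    hatHinv v lam q ρ (v i) = ρ⁻¹ • v i := by
  rw [hatHinv, sum_smul_projCL_apply, if_neg (not_lt.2 hi)]

/-- Armijo condition for a unit step of length `t` on the quadratic `x ↦ L x² / 2` at `x = 1`. -/
theorem quadratic_armijo_iff {L t α : ℝ} (hL : 0 < L) (ht : 0 < t) :
    1 / 2 * ((1 - t) * ((1 - t) * L)) ≤ 1 / 2 * L - α * (t * L) ↔ α ≤ 1 - t / 2 := by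
  have hLt : 0 < L * t := mul_pos hL ht
  have key : 1 / 2 * ((1 - t) * ((1 - t) * L)) - (1 / 2 * L - α * (t * L)) =
      L * t * (α - (1 - t / 2)) := by ring
  constructor <;> intro h <;> nlinarith

theorem stmt17_general (n q : ℕ) (hq : q ≤ n) (lam : Fin (n + 1) → ℝ)
    (hpos : ∀ i, 0 < lam i) (fstar : ℝ) :
    ∃ θ θstar : EuclideanSpace ℝ (Fin (n + 1)),
      ∀ α : ℝ, 0 < α → α < 1 / 2 →
        (fstar + (1 / 2) *
            (inner ℝ
              ((θ - hatHinv (EuclideanSpace.basisFun (Fin (n + 1)) ℝ) lam q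
                  ((lam ⟨q, Nat.lt_succ_of_le hq⟩ + lam (Fin.last n)) / 2)
                  (diagCL lam (θ - θstar))) - θstar)
              (diagCL lam
                ((θ - hatHinv (EuclideanSpace.basisFun (Fin (n + 1)) ℝ) lam q
                    ((lam ⟨q, Nat.lt_succ_of_le hq⟩ + lam (Fin.last n)) / 2)
                    (diagCL lam (θ - θstar))) - θstar)) : ℝ) ≤
          (fstar + (1 / 2) * (inner ℝ (θ - θstar) (diagCL lam (θ - θstar)) : ℝ)) -
            α * (inner ℝ
              (hatHinv (EuclideanSpace.basisFun (Fin (n + 1)) ℝ) lam q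
                ((lam ⟨q, Nat.lt_succ_of_le hq⟩ + lam (Fin.last n)) / 2)
                (diagCL lam (θ - θstar)))
              (diagCL lam (θ - θstar)) : ℝ)) →
          α ≤ lam (Fin.last n) / (lam ⟨q, Nat.lt_succ_of_le hq⟩ + lam (Fin.last n)) := by
  set i : Fin (n + 1) := ⟨q, Nat.lt_succ_of_le hq⟩
  set e := EuclideanSpace.basisFun (Fin (n + 1)) ℝ i
  set L := lam i
  set M := lam (Fin.last n)
  set ρ := (L + M) / 2
  have hL : 0 < L := hpos i
  have hM : 0 < M := hpos _
  have hg : diagCL lam e = L • e := diagCL_apply_basisFun lam i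
  have hp : hatHinv (EuclideanSpace.basisFun (Fin (n + 1)) ℝ) lam q ρ (L • e) = (L / ρ) • e := by
    rw [map_smul, hatHinv_apply_of_le (i := i) _ _ _ le_rfl, smul_smul, div_eq_mul_inv]
  have hstep : e - (L / ρ) • e = (1 - L / ρ) • e := by rw [sub_smul, one_smul]
  have he : inner ℝ e e = 1 := (EuclideanSpace.basisFun (Fin (n + 1)) ℝ).inner_eq_one i
  refine ⟨e, 0, fun α _ _ harmijo => ?_⟩
  simp only [sub_zero, hg, hp, hstep, map_smul, real_inner_smul_left, real_inner_smul_right,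
    he, smul_smul] at harmijo
  calc α ≤ 1 - L / ρ / 2 :=
        (quadratic_armijo_iff hL (by positivity)).1 (by linear_combination harmijo)
    _ = M / (L + M) := by simp only [ρ]; field_simp; ring

/-- counter-example.  With `Ĥ = diag(λ₁,…,λ_q,ρ*,…,ρ*)`,
`ρ* = (λ_{q+1}+λ_n)/2`, there exist `θ, θ*` (hence a gradient `g = H(θ−θ*)`) such that
the full step `η = 1` with `p = Ĥ⁻¹g` satisfies the Armijo condition for the quadratic
cost only if `α ≤ λ_n/(λ_{q+1}+λ_n)`. -/
theorem stmt17 (n q : ℕ) (hq : q ≤ n) (lam : Fin (n + 1) → ℝ)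
    (hmono : ∀ i j : Fin (n + 1), i ≤ j → lam j ≤ lam i)
    (hpos : ∀ i, 0 < lam i) (fstar : ℝ) :
    ∃ θ θstar : EuclideanSpace ℝ (Fin (n + 1)),
      ∀ α : ℝ, 0 < α → α < 1 / 2 →
        (fstar + (1 / 2) *
            (inner ℝ
              ((θ - hatHinv (EuclideanSpace.basisFun (Fin (n + 1)) ℝ) lam q
                  ((lam ⟨q, Nat.lt_succ_of_le hq⟩ + lam (Fin.last n)) / 2)
                  (diagCL lam (θ - θstar))) - θstar)
              (diagCL lam
                ((θ - hatHinv (EuclideanSpace.basisFun (Fin (n + 1)) ℝ) lam q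
                    ((lam ⟨q, Nat.lt_succ_of_le hq⟩ + lam (Fin.last n)) / 2)
                    (diagCL lam (θ - θstar))) - θstar)) : ℝ) ≤
          (fstar + (1 / 2) * (inner ℝ (θ - θstar) (diagCL lam (θ - θstar)) : ℝ)) -
            α * (inner ℝ
              (hatHinv (EuclideanSpace.basisFun (Fin (n + 1)) ℝ) lam q
                ((lam ⟨q, Nat.lt_succ_of_le hq⟩ + lam (Fin.last n)) / 2)
                (diagCL lam (θ - θstar)))
              (diagCL lam (θ - θstar)) : ℝ)) →
          α ≤ lam (Fin.last n) / (lam ⟨q, Nat.lt_succ_of_le hq⟩ + lam (Fin.last n)) :=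
  stmt17_general n q hq lam hpos fstar
end
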